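/- arXiv:2602.04898 — 3 statements merged into one kernel-verified Lean document; each statement's English description precedes it below -/
import Mathlib

section
/- Let Q ∈ ℝ^{n_q × d_k}, W_k ∈ ℝ^{d_k × d}, W_v ∈ ℝ^{d_v × d}, and H, H' ∈ ℝ^{d × n} with ‖H − H'‖_F ≤ ε. Define K = (W_k H)^T ∈ ℝ^{n × d_k}, V = H^T W_v^T ∈ ℝ^{n × d_v}, S = softmax(Q K^T / √d_k), an n_q × n row-stochastic matrix, and the cross-attention output A = S V, and analogously K', V', S', A' for H'. Assume ‖Q‖_F ≤ B_Q, ‖H‖_F ≤ B_H, and that the row-wise softmax map is L_sm-Lipschitz in Frobenius norm between the two score matrices, i.e. ‖softmax(Q K^T/√d_k) − softmax(Q K'^T/√d_k)‖_F ≤ L_sm ‖Q K^T/√d_k − Q K'^T/√d_k‖_F. Then ‖A − A'‖_F ≤ ε ( C_1 ‖W_v‖_F + C_2 ‖W_k‖_F ‖W_v‖_F ), where C_1 = √n_q and C_2 = (L_sm B_Q / √d_k) · B_H. -/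
open Matrix

/-- Frobenius norm of a real matrix. -/
noncomputable def frob {m n : ℕ} (A : Matrix (Fin m) (Fin n) ℝ) : ℝ :=
  Real.sqrt (∑ i, ∑ j, (A i j) ^ 2)

/-- Row-wise softmax of a real matrix. -/
noncomputable def softmaxRow {m n : ℕ} (A : Matrix (Fin m) (Fin n) ℝ) :
    Matrix (Fin m) (Fin n) ℝ :=
  Matrix.of fun i j => Real.exp (A i j) / ∑ k, Real.exp (A i k)

attribute [local instance] Matrix.frobeniusSeminormedAddCommGroup
attribute [local instance] Matrix.frobeniusNormedSpace

lemma frob_eq_norm {m n : ℕ} (A : Matrix (Fin m) (Fin n) ℝ) : frob A = ‖A‖ := by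
  rw [Matrix.frobenius_norm_def, frob, Real.sqrt_eq_rpow]
  congr 1
  simp [Real.rpow_two, Real.norm_eq_abs, sq_abs]

lemma frob_softmax_le {m n : ℕ} (A : Matrix (Fin m) (Fin n) ℝ) :
    frob (softmaxRow A) ≤ Real.sqrt m := by
  unfold frob
  apply Real.sqrt_le_sqrt
  have hrow : ∀ i : Fin m, ∑ j, (softmaxRow A i j) ^ 2 ≤ 1 := by
    intro i
    rcases Nat.eq_zero_or_pos n with hn | hn
    · subst hn; simp
    · haveI : NeZero n := ⟨hn.ne'⟩
      have hT : 0 < ∑ k, Real.exp (A i k) :=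
        Finset.sum_pos (fun _ _ => Real.exp_pos _) Finset.univ_nonempty
      have hbound : ∀ j : Fin n, (softmaxRow A i j) ^ 2 ≤ softmaxRow A i j := by
        intro j
        have h0 : 0 ≤ softmaxRow A i j := by
          simp only [softmaxRow, Matrix.of_apply]
          positivity
        have h1 : softmaxRow A i j ≤ 1 := by
          simp only [softmaxRow, Matrix.of_apply]
          rw [div_le_one hT]
          exact Finset.single_le_sum (fun k _ => (Real.exp_pos (A i k)).le)
            (Finset.mem_univ j)
        nlinarith
      calc ∑ j, (softmaxRow A i j) ^ 2 ≤ ∑ j, softmaxRow A i j :=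
            Finset.sum_le_sum fun j _ => hbound j
        _ = 1 := by
            simp only [softmaxRow, Matrix.of_apply]
            rw [← Finset.sum_div, div_self hT.ne']
  calc ∑ i, ∑ j, (softmaxRow A i j) ^ 2 ≤ ∑ _i : Fin m, (1 : ℝ) :=
        Finset.sum_le_sum fun i _ => hrow i
    _ = (m : ℝ) := by simp

/-- Semantic stability of the cross-attention output (Corollary B.2).
Here `K = (W_k H)ᵀ` (so `Q Kᵀ = Q (W_k H)`), `V = Hᵀ W_vᵀ`,
`S = softmax(Q Kᵀ / √d_k)` and `A = S V`, and similarly for `H'`. -/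
theorem stmt1 {nq dk dv d n : ℕ}
    (Q : Matrix (Fin nq) (Fin dk) ℝ) (Wk : Matrix (Fin dk) (Fin d) ℝ)
    (Wv : Matrix (Fin dv) (Fin d) ℝ) (H H' : Matrix (Fin d) (Fin n) ℝ)
    (ε BQ BH Lsm : ℝ)
    (hHH' : frob (H - H') ≤ ε)
    (hQ : frob Q ≤ BQ) (hH : frob H ≤ BH) (hLsm : 0 ≤ Lsm)
    (hLip : frob (softmaxRow ((1 / Real.sqrt dk) • (Q * (Wk * H))) -
              softmaxRow ((1 / Real.sqrt dk) • (Q * (Wk * H')))) ≤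
            Lsm * frob ((1 / Real.sqrt dk) • (Q * (Wk * H)) -
              (1 / Real.sqrt dk) • (Q * (Wk * H')))) :
    frob (softmaxRow ((1 / Real.sqrt dk) • (Q * (Wk * H))) * (Hᵀ * Wvᵀ) -
          softmaxRow ((1 / Real.sqrt dk) • (Q * (Wk * H'))) * (H'ᵀ * Wvᵀ)) ≤
      ε * (Real.sqrt nq * frob Wv +
           (Lsm * BQ / Real.sqrt dk) * BH * (frob Wk * frob Wv)) := by
  have hε : 0 ≤ ε := le_trans (Real.sqrt_nonneg _) hHH'
  have hBQ : 0 ≤ BQ := le_trans (Real.sqrt_nonneg _) hQ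
  have hBH : 0 ≤ BH := le_trans (Real.sqrt_nonneg _) hH
  set s : ℝ := 1 / Real.sqrt dk with hs
  have hsnn : 0 ≤ s := by positivity
  set S := softmaxRow (s • (Q * (Wk * H))) with hS
  set S' := softmaxRow (s • (Q * (Wk * H'))) with hS'
  set V := Hᵀ * Wvᵀ with hV
  set V' := H'ᵀ * Wvᵀ with hV'
  simp only [frob_eq_norm] at hHH' hQ hH hLip ⊢
  -- key decomposition
  have key : S * V - S' * V' = (S - S') * V + S' * (V - V') := by
    rw [Matrix.sub_mul, Matrix.mul_sub]; abel
  -- bound on ‖S - S'‖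
  have hdiff : s • (Q * (Wk * H)) - s • (Q * (Wk * H')) = s • (Q * (Wk * (H - H'))) := by
    rw [← smul_sub, Matrix.mul_sub, ← Matrix.mul_sub]
  have hSS' : ‖S - S'‖ ≤ Lsm * (s * (BQ * (‖Wk‖ * ε))) := by
    refine hLip.trans ?_
    rw [hdiff, norm_smul, Real.norm_eq_abs, abs_of_nonneg hsnn]
    have h1 : ‖Q * (Wk * (H - H'))‖ ≤ BQ * (‖Wk‖ * ε) := by
      calc ‖Q * (Wk * (H - H'))‖ ≤ ‖Q‖ * ‖Wk * (H - H')‖ :=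
            Matrix.frobenius_norm_mul _ _
        _ ≤ ‖Q‖ * (‖Wk‖ * ‖H - H'‖) := by
            have := Matrix.frobenius_norm_mul Wk (H - H')
            nlinarith [norm_nonneg Q]
        _ ≤ BQ * (‖Wk‖ * ε) := by
            have h2 : ‖Wk‖ * ‖H - H'‖ ≤ ‖Wk‖ * ε :=
              mul_le_mul_of_nonneg_left hHH' (norm_nonneg _)
            exact mul_le_mul hQ h2 (by positivity) hBQ
    exact mul_le_mul_of_nonneg_left (mul_le_mul_of_nonneg_left h1 hsnn) hLsm
  -- bound on ‖V‖
  have hVb : ‖V‖ ≤ BH * ‖Wv‖ := by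
    calc ‖V‖ ≤ ‖Hᵀ‖ * ‖Wvᵀ‖ := Matrix.frobenius_norm_mul _ _
      _ = ‖H‖ * ‖Wv‖ := by rw [Matrix.frobenius_norm_transpose,
            Matrix.frobenius_norm_transpose]
      _ ≤ BH * ‖Wv‖ := mul_le_mul_of_nonneg_right hH (norm_nonneg _)
  -- bound on ‖V - V'‖
  have hVV' : ‖V - V'‖ ≤ ε * ‖Wv‖ := by
    have : V - V' = (H - H')ᵀ * Wvᵀ := by
      rw [hV, hV', ← Matrix.sub_mul, Matrix.transpose_sub]
    rw [this]
    calc ‖(H - H')ᵀ * Wvᵀ‖ ≤ ‖(H - H')ᵀ‖ * ‖Wvᵀ‖ := Matrix.frobenius_norm_mul _ _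
      _ = ‖H - H'‖ * ‖Wv‖ := by rw [Matrix.frobenius_norm_transpose,
            Matrix.frobenius_norm_transpose]
      _ ≤ ε * ‖Wv‖ := mul_le_mul_of_nonneg_right hHH' (norm_nonneg _)
  -- bound on ‖S'‖
  have hS'b : ‖S'‖ ≤ Real.sqrt nq := by
    rw [← frob_eq_norm]; exact frob_softmax_le _
  have h1 : ‖(S - S') * V‖ ≤ Lsm * (s * (BQ * (‖Wk‖ * ε))) * (BH * ‖Wv‖) := by
    refine (Matrix.frobenius_norm_mul _ _).trans ?_
    exact mul_le_mul hSS' hVb (norm_nonneg _) (by positivity)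
  have h2 : ‖S' * (V - V')‖ ≤ Real.sqrt nq * (ε * ‖Wv‖) := by
    refine (Matrix.frobenius_norm_mul _ _).trans ?_
    exact mul_le_mul hS'b hVV' (norm_nonneg _) (Real.sqrt_nonneg _)
  have htri : ‖S * V - S' * V'‖ ≤ ‖(S - S') * V‖ + ‖S' * (V - V')‖ := by
    rw [key]; exact norm_add_le _ _
  have hrhs : ε * (Real.sqrt nq * ‖Wv‖ + Lsm * BQ / Real.sqrt dk * BH * (‖Wk‖ * ‖Wv‖)) =
      Lsm * (s * (BQ * (‖Wk‖ * ε))) * (BH * ‖Wv‖) + Real.sqrt nq * (ε * ‖Wv‖) := by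
    rw [hs]; ring
  rw [hrhs]
  exact htri.trans (add_le_add h1 h2)
end

section
/- Consider AMSGrad run for T iterations on a sequence of convex differentiable losses ℓ_t : ℝ^d → ℝ with gradients g_t = ∇ℓ_t(w_t), first-moment parameters β_{1,t} = β_1/√t with β_1 ∈ (0,1), constant second-moment parameter β_2 ∈ (0,1) with β_1² < β_2, and updates m_{t,i} = β_{1,t} m_{t-1,i} + (1−β_{1,t}) g_{t,i} with m_0 = 0, v_{t,i} = (1−β_2) Σ_{s=1}^t β_2^{t−s} g_{s,i}², v̂_{t,i} = max_{1≤s≤t} v_{s,i}, and w_{t+1,i} = w_{t,i} − γ_t m_{t,i}/√(v̂_{t,i}), where γ_t = α_t/(1 − ∏_{s=1}^t β_{1,s}) with constant α_t ≡ γ > 0. Assume: (i) |w_{t,i} − w*_i| ≤ D for all t, i, where w* is any comparator; (ii) |g_{t,i}| ≤ G for all t, i; (iii) v̂_{t,i} > 0 and the sequence √(v̂_{t,i})/α_t is non-decreasing in t for each i. Then the average optimality gap satisfies (1/T) Σ_{t=1}^T (ℓ_t(w_t) − ℓ_t(w*)) ≤ d D² G / (2 T γ (1−β_1)) + 2 d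 D G β_1 / ((1−β_1)√T) + d G γ C(β_1,β_2) / (2(1−β_1)), where C(β_1,β_2) = β_2 / ((1−β_2)(β_2 − β_1²)). -/
/-!
Convexity bounds the regret by `∑_t ⟨g_t, w_t - w⋆⟩`, which splits over coordinates. In one
coordinate, write `Δ_t = w_t - w⋆`. Expanding `Δ_{t+1}²` along the update and solving the momentum
recursion for `g_t` splits `g_t Δ_t` into three pieces: the difference `Δ_t² - Δ_{t+1}²` weighted
by `√v̂_t / (γ_t (1 - β_{1,t}))`, the step term `γ_t m_t² / (√v̂_t (1 - β_{1,t}))`, and the drift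
`-β_{1,t} m_{t-1} Δ_t / (1 - β_{1,t})`. The weights increase no faster than the nondecreasing
envelope `√v̂_t (1 - ∏_{s ≤ t} β_{1,s}) / (γ (1 - β₁))`, so summation by parts bounds the first sum
by `D²G / (γ (1 - β₁))`. A weighted Cauchy–Schwarz inequality gives
`m_t² ≤ β₂ / (β₂ - β₁²) ∑_s β₂^{t-s} g_s²`, so `m_t²` is at most a constant times `v_t ≤ v̂_t`
and each step term is `O(γ G)`. The momentum is a convex combination of gradients, so
`|m_t| ≤ G`, the drift is `O(1/√t)`, and it sums to `O(√T)`.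
-/

open Finset Real

lemma sum_inv_sqrt_le (T : ℕ) : ∑ t ∈ Icc 1 T, (√(t : ℝ))⁻¹ ≤ 2 * √(T : ℝ) := by
  induction T with
  | zero => simp
  | succ n ih =>
    rw [sum_Icc_succ_top (by omega)]
    have hs : 0 < √((n + 1 : ℕ) : ℝ) := by positivity
    have hsq : √((n + 1 : ℕ) : ℝ) ^ 2 = n + 1 := by rw [sq_sqrt (by positivity)]; push_cast; ring
    have hsq' : √(n : ℝ) ^ 2 = n := sq_sqrt (by positivity)
    -- `1 / √(n+1) ≤ 2 (√(n+1) - √n)` is AM-GM for `√n √(n+1)`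
    have hstep : (√((n + 1 : ℕ) : ℝ))⁻¹ ≤ 2 * √((n + 1 : ℕ) : ℝ) - 2 * √(n : ℝ) := by
      rw [inv_le_iff_one_le_mul₀' hs]
      nlinarith [sq_nonneg (√((n + 1 : ℕ) : ℝ) - √(n : ℝ))]
    linarith

lemma sum_sub_mul_le_of_increment_le {a c X : ℕ → ℝ} {A : ℝ} {T : ℕ} (hT : 1 ≤ T)
    (ha : ∀ t, 0 ≤ a t) (haA : ∀ t, 1 ≤ t → t ≤ T → a t ≤ A) (hc1 : c 1 ≤ X 1) (hX1 : 0 ≤ X 1)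
    (hX : ∀ t, 1 ≤ t → t + 1 ≤ T → X t ≤ X (t + 1))
    (hc : ∀ t, 1 ≤ t → t + 1 ≤ T → c (t + 1) - c t ≤ X (t + 1) - X t) (hcT : 0 ≤ c T) :
    ∑ t ∈ Icc 1 T, (a t - a (t + 1)) * c t ≤ A * X T := by
  suffices key : ∀ n, 1 ≤ n → n ≤ T →
      ∑ t ∈ Icc 1 n, (a t - a (t + 1)) * c t + a (n + 1) * c n ≤ A * X n by
    nlinarith [key T hT le_rfl, ha (T + 1)]
  intro n hn
  induction n, hn using Nat.le_induction with
  | base =>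
    intro h1
    simp only [Icc_self, sum_singleton]
    nlinarith [ha 1, haA 1 le_rfl h1]
  | succ n hn ih =>
    intro hnT
    rw [sum_Icc_succ_top (by omega)]
    have hXn := hX n hn hnT
    nlinarith [ih (by omega), hc n hn hnT, ha (n + 1), haA (n + 1) (by omega) hnT]

lemma div_one_sub_sub_div_one_sub_le {y y' b b' β : ℝ} (hy : 0 ≤ y) (hyy' : y ≤ y')
    (hb' : b' ≤ b) (hbβ : b ≤ β) (hβ : β < 1) :
    y' / (1 - b') - y / (1 - b) ≤ (y' - y) / (1 - β) := by
  have h1 : y' / (1 - b') ≤ y' / (1 - b) :=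
    div_le_div_of_nonneg_left (by linarith) (by linarith) (by linarith)
  have h2 : (y' - y) / (1 - b) ≤ (y' - y) / (1 - β) :=
    div_le_div_of_nonneg_left (by linarith) (by linarith) (by linarith)
  rw [sub_div] at h2
  linarith

lemma mul_sub_eq_of_momentum_step {b η s m m' g w w' w₀ : ℝ} (hb : b ≠ 1) (hη : η ≠ 0)
    (hs : s ≠ 0) (hm : m = b * m' + (1 - b) * g) (hw : w' = w - η * m / s) :
    g * (w - w₀) = ((w - w₀) ^ 2 - (w' - w₀) ^ 2) * (s / η / (1 - b)) / 2
      + η * m ^ 2 / (s * (1 - b)) / 2 - b * m' * (w - w₀) / (1 - b) := by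
  have hb' : 1 - b ≠ 0 := sub_ne_zero.mpr (Ne.symm hb)
  have hg : g = (m - b * m') / (1 - b) := by rw [eq_div_iff hb']; linarith
  subst hg hw
  field_simp
  ring

lemma ConvexOn.le_sub_of_hasFDerivAt {E : Type*} [NormedAddCommGroup E] [NormedSpace ℝ E]
    {f : E → ℝ} {f' : E →L[ℝ] ℝ} {x : E} (hf : ConvexOn ℝ Set.univ f) (hd : HasFDerivAt f f' x)
    (y : E) : f' (y - x) ≤ f y - f x := by
  have hline : ConvexOn ℝ Set.univ (f ∘ AffineMap.lineMap (k := ℝ) x y) := by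
    simpa using hf.comp_affineMap (AffineMap.lineMap (k := ℝ) x y)
  have hd' : HasDerivAt (f ∘ AffineMap.lineMap (k := ℝ) x y) (f' (y - x)) 0 := by
    have hcurve : HasDerivAt (AffineMap.lineMap x y : ℝ → E) (y - x) 0 :=
      AffineMap.hasDerivAt_lineMap
    exact (by simpa using hd : HasFDerivAt f f' (AffineMap.lineMap x y (0 : ℝ))).comp_hasDerivAt
      (0 : ℝ) hcurve
  simpa [slope_def_field] using
    hline.le_slope_of_hasDerivAt (Set.mem_univ 0) (Set.mem_univ 1) one_pos hd'

lemma ConvexOn.sub_le_sum_mul_of_hasGradientAt {n : ℕ} {f : EuclideanSpace ℝ (Fin n) → ℝ}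
    {g x : EuclideanSpace ℝ (Fin n)} (hf : ConvexOn ℝ Set.univ f) (hd : HasGradientAt f g x)
    (y : EuclideanSpace ℝ (Fin n)) : f x - f y ≤ ∑ i, g i * (x i - y i) := by
  have h := hf.le_sub_of_hasFDerivAt hd.hasFDerivAt y
  simp only [InnerProductSpace.toDual_apply_apply, PiLp.inner_apply, RCLike.inner_apply,
    conj_trivial, PiLp.sub_apply] at h
  have e : ∑ i, g i * (x i - y i) = -∑ i, (y i - x i) * g i := by
    rw [← sum_neg_distrib]; exact sum_congr rfl fun i _ => by ring
  linarith

/-- Weighted Cauchy–Schwarz; this is where the constant `β₂ / (β₂ - β₁²)` of the bound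
comes from. -/
lemma sq_convexComb_le {b β₁ β₂ x y : ℝ} (hb : b ∈ Set.Icc 0 1) (hbβ : b ≤ β₁)
    (hβ : β₁ ^ 2 < β₂) :
    (b * x + (1 - b) * y) ^ 2 ≤ β₂ * x ^ 2 + β₂ / (β₂ - β₁ ^ 2) * y ^ 2 := by
  have hκ : β₂ / (β₂ - β₁ ^ 2) = 1 + β₁ ^ 2 / (β₂ - β₁ ^ 2) := by
    field_simp [(sub_pos.mpr hβ).ne']; ring
  have habs : |b * x + (1 - b) * y| ≤ β₁ * |x| + |y| := by
    calc |b * x + (1 - b) * y| ≤ b * |x| + (1 - b) * |y| := by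
          refine (abs_add_le _ _).trans_eq ?_
          rw [abs_mul, abs_mul, abs_of_nonneg hb.1, abs_of_nonneg (sub_nonneg.mpr hb.2)]
      _ ≤ β₁ * |x| + |y| := by nlinarith [abs_nonneg x, abs_nonneg y, hb.1]
  have hcs : (β₁ * |x| + |y|) ^ 2 ≤ β₂ * |x| ^ 2 + β₂ / (β₂ - β₁ ^ 2) * |y| ^ 2 := by
    have h := div_nonneg (sq_nonneg ((β₂ - β₁ ^ 2) * |x| - β₁ * |y|)) (sub_pos.mpr hβ).le
    have e : ((β₂ - β₁ ^ 2) * |x| - β₁ * |y|) ^ 2 / (β₂ - β₁ ^ 2) =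
        (β₂ - β₁ ^ 2) * |x| ^ 2 - 2 * β₁ * |x| * |y| + β₁ ^ 2 / (β₂ - β₁ ^ 2) * |y| ^ 2 := by
      field_simp [(sub_pos.mpr hβ).ne']; ring
    rw [hκ]
    nlinarith
  calc (b * x + (1 - b) * y) ^ 2 ≤ (β₁ * |x| + |y|) ^ 2 :=
        sq_le_sq' (by linarith [neg_abs_le (b * x + (1 - b) * y)]) (le_abs_self _ |>.trans habs)
    _ ≤ _ := by simpa only [sq_abs] using hcs

def discountedSum (β : ℝ) (f : ℕ → ℝ) (t : ℕ) : ℝ := ∑ s ∈ Icc 1 t, β ^ (t - s) * f s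

@[simp]
lemma discountedSum_zero (β : ℝ) (f : ℕ → ℝ) : discountedSum β f 0 = 0 := by
  simp [discountedSum]

lemma discountedSum_succ (β : ℝ) (f : ℕ → ℝ) (t : ℕ) :
    discountedSum β f (t + 1) = β * discountedSum β f t + f (t + 1) := by
  rw [discountedSum, discountedSum, sum_Icc_succ_top (by omega), mul_sum, Nat.sub_self, pow_zero,
    one_mul]
  congr 1
  refine sum_congr rfl fun s hs => ?_
  rw [show t + 1 - s = t - s + 1 by have := (mem_Icc.mp hs).2; omega, pow_succ]
  ring

lemma one_sub_mul_discountedSum_le {β M : ℝ} {f : ℕ → ℝ} (hβ : β ∈ Set.Icc 0 1) (t : ℕ)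
    (hf : ∀ s, 1 ≤ s → s ≤ t → f s ≤ M) (hM : 0 ≤ M) : (1 - β) * discountedSum β f t ≤ M := by
  induction t with
  | zero => simpa using hM
  | succ n ih =>
    have ih := ih fun s hs hsn => hf s hs (by omega)
    have hfn := hf (n + 1) (by omega) le_rfl
    rw [discountedSum_succ]
    nlinarith [hβ.1, hβ.2]

section FirstMoment

variable {b g m : ℕ → ℝ} {T : ℕ}

lemma abs_le_of_eq_convexComb {G : ℝ} (hG : 0 ≤ G) (hm0 : m 0 = 0)
    (hb : ∀ t, 1 ≤ t → t ≤ T → b t ∈ Set.Icc 0 1)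
    (hm : ∀ t, 1 ≤ t → t ≤ T → m t = b t * m (t - 1) + (1 - b t) * g t)
    (hg : ∀ t, 1 ≤ t → t ≤ T → |g t| ≤ G) : ∀ t ≤ T, |m t| ≤ G := by
  intro t
  induction t with
  | zero => simpa [hm0] using hG
  | succ n ih =>
    intro hn
    obtain ⟨hb0, hb1⟩ := hb (n + 1) (by omega) hn
    rw [hm (n + 1) (by omega) hn, Nat.add_sub_cancel]
    calc |b (n + 1) * m n + (1 - b (n + 1)) * g (n + 1)|
        ≤ b (n + 1) * |m n| + (1 - b (n + 1)) * |g (n + 1)| := by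
          refine (abs_add_le _ _).trans_eq ?_
          rw [abs_mul, abs_mul, abs_of_nonneg hb0, abs_of_nonneg (sub_nonneg.mpr hb1)]
      _ ≤ b (n + 1) * G + (1 - b (n + 1)) * G := by
          gcongr
          · exact ih (by omega)
          · exact hg (n + 1) (by omega) hn
      _ = G := by ring

lemma sq_le_discountedSum_of_eq_convexComb {β₁ β₂ : ℝ} (hβ₂ : 0 ≤ β₂) (hβ : β₁ ^ 2 < β₂)
    (hm0 : m 0 = 0) (hb : ∀ t, 1 ≤ t → t ≤ T → b t ∈ Set.Icc 0 1 ∧ b t ≤ β₁)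
    (hm : ∀ t, 1 ≤ t → t ≤ T → m t = b t * m (t - 1) + (1 - b t) * g t) :
    ∀ t ≤ T, m t ^ 2 ≤ β₂ / (β₂ - β₁ ^ 2) * discountedSum β₂ (fun s => g s ^ 2) t := by
  intro t
  induction t with
  | zero => simp [hm0]
  | succ n ih =>
    intro hn
    obtain ⟨hb01, hbβ⟩ := hb (n + 1) (by omega) hn
    rw [hm (n + 1) (by omega) hn, Nat.add_sub_cancel, discountedSum_succ]
    have := mul_le_mul_of_nonneg_left (ih (by omega)) hβ₂
    nlinarith [sq_convexComb_le (x := m n) (y := g (n + 1)) hb01 hbβ hβ]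

end FirstMoment

namespace AMSGrad

-- The paper's `β_{1,t}`; `momentumProd` is `∏_{s ≤ t} β_{1,s}` and `stepSize` is `γ_t`.
noncomputable def momentumCoeff (β₁ : ℝ) (t : ℕ) : ℝ := β₁ / √t

noncomputable def momentumProd (β₁ : ℝ) (t : ℕ) : ℝ := ∏ s ∈ Icc 1 t, momentumCoeff β₁ s

section Coefficients

variable {β₁ : ℝ} {t : ℕ}

@[simp]
lemma momentumCoeff_one : momentumCoeff β₁ 1 = β₁ := by simp [momentumCoeff]

lemma momentumCoeff_pos (hβ₁ : 0 < β₁) (ht : 1 ≤ t) : 0 < momentumCoeff β₁ t :=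
  div_pos hβ₁ (by positivity)

lemma momentumCoeff_le (hβ₁ : 0 ≤ β₁) (ht : 1 ≤ t) : momentumCoeff β₁ t ≤ β₁ :=
  div_le_self hβ₁ (one_le_sqrt.mpr (by exact_mod_cast ht))

lemma momentumCoeff_succ_le (hβ₁ : 0 ≤ β₁) (ht : 1 ≤ t) :
    momentumCoeff β₁ (t + 1) ≤ momentumCoeff β₁ t :=
  div_le_div_of_nonneg_left hβ₁ (by positivity) (sqrt_le_sqrt (by push_cast; linarith))

lemma momentumProd_succ :
    momentumProd β₁ (t + 1) = momentumProd β₁ t * momentumCoeff β₁ (t + 1) :=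
  prod_Icc_succ_top (by omega) _

lemma momentumProd_pos (hβ₁ : 0 < β₁) : 0 < momentumProd β₁ t :=
  prod_pos fun _ hs => momentumCoeff_pos hβ₁ (mem_Icc.mp hs).1

lemma momentumProd_succ_le (hβ₁ : β₁ ∈ Set.Ioo 0 1) :
    momentumProd β₁ (t + 1) ≤ momentumProd β₁ t := by
  rw [momentumProd_succ]
  exact mul_le_of_le_one_right (momentumProd_pos hβ₁.1).le
    ((momentumCoeff_le hβ₁.1.le (by omega)).trans hβ₁.2.le)

lemma momentumProd_le (hβ₁ : β₁ ∈ Set.Ioo 0 1) (ht : 1 ≤ t) : momentumProd β₁ t ≤ β₁ := by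
  induction t, ht using Nat.le_induction with
  | base => simp [momentumProd]
  | succ n _ ih => exact momentumProd_succ_le hβ₁ |>.trans ih

lemma momentumProd_le_mul_momentumCoeff (hβ₁ : β₁ ∈ Set.Ioo 0 1) (ht : 2 ≤ t) :
    momentumProd β₁ t ≤ β₁ * momentumCoeff β₁ t := by
  obtain ⟨n, rfl⟩ : ∃ n, t = n + 1 := ⟨t - 1, by omega⟩
  rw [momentumProd_succ]
  exact mul_le_mul_of_nonneg_right (momentumProd_le hβ₁ (by omega))
    (momentumCoeff_pos hβ₁.1 (by omega)).le

lemma one_sub_le_one_sub_momentumProd_mul (hβ₁ : β₁ ∈ Set.Ioo 0 1) (ht : 2 ≤ t) :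
    1 - β₁ ≤ (1 - momentumProd β₁ t) * (1 - momentumCoeff β₁ t) := by
  obtain ⟨hβ₀, hβ₁'⟩ := hβ₁
  set u := (√(t : ℝ))⁻¹ with hu
  have hb : momentumCoeff β₁ t = β₁ * u := div_eq_mul_inv _ _
  have hu0 : 0 ≤ u := by positivity
  have hu2 : u ^ 2 ≤ 1 / 2 := by
    rw [hu, inv_pow, sq_sqrt (by positivity), inv_le_comm₀ (by positivity) (by norm_num)]
    norm_num
    exact_mod_cast ht
  have hP := momentumProd_le_mul_momentumCoeff ⟨hβ₀, hβ₁'⟩ ht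
  rw [hb] at hP ⊢
  have hbu : β₁ * u ≤ 1 := by nlinarith
  have hquad : 0 ≤ u ^ 2 * β₁ ^ 2 - u * β₁ + 1 - u := by nlinarith [sq_nonneg (u * β₁ - 1 / 2)]
  calc 1 - β₁ ≤ (1 - β₁ * (β₁ * u)) * (1 - β₁ * u) := by nlinarith
    _ ≤ _ := mul_le_mul_of_nonneg_right (by linarith) (by linarith)

end Coefficients

noncomputable def stepSize (β₁ γ : ℝ) (t : ℕ) : ℝ := γ / (1 - momentumProd β₁ t)

lemma stepSize_pos {β₁ γ : ℝ} (hβ₁ : β₁ ∈ Set.Ioo 0 1) (hγ : 0 < γ) {t : ℕ} (ht : 1 ≤ t) :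
    0 < stepSize β₁ γ t :=
  div_pos hγ (by linarith [momentumProd_le hβ₁ ht, hβ₁.2])

section Coordinate

variable {g m v vhat w : ℕ → ℝ} {w₀ β₁ β₂ γ D G : ℝ} {T : ℕ}

lemma sq_firstMoment_le (hβ₁ : β₁ ∈ Set.Ioo 0 1) (hβ₂ : β₂ ∈ Set.Ioo 0 1) (hβ : β₁ ^ 2 < β₂)
    (hm0 : m 0 = 0)
    (hm : ∀ t, 1 ≤ t → t ≤ T →
      m t = momentumCoeff β₁ t * m (t - 1) + (1 - momentumCoeff β₁ t) * g t)
    {t : ℕ} (ht : 1 ≤ t) (htT : t ≤ T)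
    (hv : v t = (1 - β₂) * discountedSum β₂ (fun s => g s ^ 2) t) (hvhat : v t ≤ vhat t) :
    m t ^ 2 ≤ β₂ / ((1 - β₂) * (β₂ - β₁ ^ 2)) / (1 - β₁) *
      ((1 - momentumProd β₁ t) * (1 - momentumCoeff β₁ t)) * vhat t := by
  have hK : 0 ≤ β₂ / ((1 - β₂) * (β₂ - β₁ ^ 2)) / (1 - β₁) :=
    div_nonneg (div_nonneg hβ₂.1.le (mul_nonneg (by linarith [hβ₂.2]) (by linarith)))
      (by linarith [hβ₁.2])
  refine le_trans ?_ (mul_le_mul_of_nonneg_left hvhat (mul_nonneg hK (mul_nonneg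
      (by linarith [momentumProd_le hβ₁ ht, hβ₁.2])
      (by linarith [momentumCoeff_le hβ₁.1.le ht, hβ₁.2]))))
  obtain ⟨hβ₁0, hβ₁1⟩ := hβ₁
  obtain ⟨hβ₂0, hβ₂1⟩ := hβ₂
  -- At `t = 1` the factor `(1 - momentumProd β₁ 1) * (1 - momentumCoeff β₁ 1) = (1 - β₁)²` falls
  -- below `1 - β₁`, but there `m 1 = (1 - β₁) * g 1` exactly.
  rcases ht.eq_or_lt with rfl | ht2
  · have hκ : 1 ≤ β₂ / (β₂ - β₁ ^ 2) := by rw [le_div_iff₀ (sub_pos.mpr hβ)]; nlinarith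
    have hm1 : m 1 = (1 - β₁) * g 1 := by simpa [hm0] using hm 1 le_rfl htT
    have hv1 : v 1 = (1 - β₂) * g 1 ^ 2 := by simpa [discountedSum] using hv
    have e : β₂ / ((1 - β₂) * (β₂ - β₁ ^ 2)) / (1 - β₁) * ((1 - β₁) * (1 - β₁)) *
        ((1 - β₂) * g 1 ^ 2) = (1 - β₁) * (β₂ / (β₂ - β₁ ^ 2)) * g 1 ^ 2 := by
      field_simp [(sub_pos.mpr hβ₁1).ne', (sub_pos.mpr hβ₂1).ne']
    rw [hm1, hv1, show momentumProd β₁ 1 = β₁ by simp [momentumProd], momentumCoeff_one, e]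
    nlinarith [sq_nonneg (g 1)]
  · have hS := sq_le_discountedSum_of_eq_convexComb hβ₂0.le hβ hm0
      (fun s hs _ => ⟨⟨(momentumCoeff_pos hβ₁0 hs).le,
        (momentumCoeff_le hβ₁0.le hs).trans hβ₁1.le⟩, momentumCoeff_le hβ₁0.le hs⟩) hm t htT
    have hloss := one_sub_le_one_sub_momentumProd_mul ⟨hβ₁0, hβ₁1⟩ (t := t) ht2
    have hS0 : 0 ≤ β₂ / (β₂ - β₁ ^ 2) * discountedSum β₂ (fun s => g s ^ 2) t :=
      (sq_nonneg _).trans hS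
    have e : β₂ / ((1 - β₂) * (β₂ - β₁ ^ 2)) / (1 - β₁) *
        ((1 - momentumProd β₁ t) * (1 - momentumCoeff β₁ t)) * v t =
        (β₂ / (β₂ - β₁ ^ 2) * discountedSum β₂ (fun s => g s ^ 2) t) *
          (((1 - momentumProd β₁ t) * (1 - momentumCoeff β₁ t)) / (1 - β₁)) := by
      rw [hv]; field_simp [(sub_pos.mpr hβ₁1).ne', (sub_pos.mpr hβ₂1).ne']
    rw [e]
    exact hS.trans (le_mul_of_one_le_right hS0 ((one_le_div (by linarith)).mpr hloss))


lemma mul_sub_le_of_step (hβ₁ : β₁ ∈ Set.Ioo 0 1) (hγ : 0 < γ) {K : ℝ} (hK : 0 ≤ K) {t : ℕ}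
    (ht : 1 ≤ t)
    (hm : m t = momentumCoeff β₁ t * m (t - 1) + (1 - momentumCoeff β₁ t) * g t)
    (hupd : w (t + 1) = w t - stepSize β₁ γ t * m t / √(vhat t))
    (hmsq : m t ^ 2 ≤ K * ((1 - momentumProd β₁ t) * (1 - momentumCoeff β₁ t)) * vhat t)
    (hvhat : 0 < vhat t) (hvG : √(vhat t) ≤ G) (hm' : |m (t - 1)| ≤ G) (hD : |w t - w₀| ≤ D) :
    g t * (w t - w₀) ≤ ((w t - w₀) ^ 2 - (w (t + 1) - w₀) ^ 2) *
        (√(vhat t) / stepSize β₁ γ t / (1 - momentumCoeff β₁ t)) / 2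
      + γ * K * G / 2 + β₁ * G * D / (1 - β₁) * (√(t : ℝ))⁻¹ := by
  set b := momentumCoeff β₁ t
  set P := momentumProd β₁ t
  set s := √(vhat t)
  have hb0 : 0 < b := momentumCoeff_pos hβ₁.1 ht
  have hb1 : 1 - β₁ ≤ 1 - b := by linarith [momentumCoeff_le hβ₁.1.le ht]
  have hβ1 : 0 < 1 - β₁ := by linarith [hβ₁.2]
  have h1b : 0 < 1 - b := by linarith
  have hP : 0 < 1 - P := by linarith [momentumProd_le hβ₁ ht, hβ₁.2]
  have hs : 0 < s := sqrt_pos.mpr hvhat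
  have hG : 0 ≤ G := (abs_nonneg _).trans hm'
  have hD0 : 0 ≤ D := (abs_nonneg _).trans hD
  have hη : stepSize β₁ γ t = γ / (1 - P) := rfl
  rw [mul_sub_eq_of_momentum_step (by linarith) (stepSize_pos hβ₁ hγ ht).ne' hs.ne' hm hupd]
  have hmoment : stepSize β₁ γ t * m t ^ 2 / (s * (1 - b)) ≤ γ * K * G := by
    rw [div_le_iff₀ (by nlinarith), hη, div_mul_eq_mul_div, div_le_iff₀ hP]
    calc γ * m t ^ 2 ≤ γ * (K * ((1 - P) * (1 - b)) * (s * s)) := by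
          rw [mul_self_sqrt hvhat.le]; gcongr
      _ ≤ γ * (K * ((1 - P) * (1 - b)) * (G * s)) := by gcongr
      _ = γ * K * G * (s * (1 - b)) * (1 - P) := by ring
  have hdrift : -(b * m (t - 1) * (w t - w₀) / (1 - b)) ≤
      β₁ * G * D / (1 - β₁) * (√(t : ℝ))⁻¹ := by
    have habs : |b * m (t - 1) * (w t - w₀) / (1 - b)| ≤ b * G * D / (1 - β₁) := by
      rw [abs_div, abs_mul, abs_mul, abs_of_pos hb0, abs_of_pos h1b]
      exact div_le_div₀ (by positivity) (by gcongr) hβ1 hb1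
    have e : b * G * D / (1 - β₁) = β₁ * G * D / (1 - β₁) * (√(t : ℝ))⁻¹ := by
      simp only [b, momentumCoeff]; ring
    linarith [neg_abs_le (b * m (t - 1) * (w t - w₀) / (1 - b))]
  linarith

lemma sum_sq_sub_mul_le (hT : 1 ≤ T) (hβ₁ : β₁ ∈ Set.Ioo 0 1) (hγ : 0 < γ)
    (hD : ∀ t, 1 ≤ t → t ≤ T → |w t - w₀| ≤ D)
    (hvmono : ∀ t, 1 ≤ t → t + 1 ≤ T → √(vhat t) / γ ≤ √(vhat (t + 1)) / γ)
    (hvG : √(vhat T) ≤ G) :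
    ∑ t ∈ Icc 1 T, ((w t - w₀) ^ 2 - (w (t + 1) - w₀) ^ 2) *
      (√(vhat t) / stepSize β₁ γ t / (1 - momentumCoeff β₁ t)) ≤ D ^ 2 * G / (γ * (1 - β₁)) := by
  set y : ℕ → ℝ := fun t => √(vhat t) / stepSize β₁ γ t
  have hβ1 : 0 < 1 - β₁ := by linarith [hβ₁.2]
  have hy : ∀ t, y t = √(vhat t) / γ * (1 - momentumProd β₁ t) := fun t => by
    simp only [y, stepSize]; rw [div_div_eq_mul_div, mul_div_right_comm]
  have hy0 : ∀ t, 1 ≤ t → 0 ≤ y t := fun t ht =>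
    div_nonneg (sqrt_nonneg _) (stepSize_pos hβ₁ hγ ht).le
  have hymono : ∀ t, 1 ≤ t → t + 1 ≤ T → y t ≤ y (t + 1) := fun t ht htT => by
    rw [hy, hy]
    exact mul_le_mul (hvmono t ht htT) (by linarith [momentumProd_succ_le hβ₁ (t := t)])
      (by linarith [momentumProd_le hβ₁ ht, hβ₁.2]) (by positivity)
  have hyT : y T ≤ G / γ := by
    rw [hy]
    have := momentumProd_pos hβ₁.1 (t := T)
    exact (mul_le_of_le_one_right (by positivity) (by linarith)).trans (by gcongr)
  calc _ ≤ D ^ 2 * (y T / (1 - β₁)) := by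
        refine sum_sub_mul_le_of_increment_le hT (fun _ => sq_nonneg _)
          (fun t ht htT => sq_le_sq' (abs_le.mp (hD t ht htT)).1 (abs_le.mp (hD t ht htT)).2)
          (by rw [momentumCoeff_one]) (div_nonneg (hy0 1 le_rfl) hβ1.le)
          (fun t ht htT => div_le_div_of_nonneg_right (hymono t ht htT) hβ1.le)
          (fun t ht htT => ?_)
          (div_nonneg (hy0 T hT) (by linarith [momentumCoeff_le hβ₁.1.le hT, hβ₁.2]))
        rw [← sub_div]
        exact div_one_sub_sub_div_one_sub_le (hy0 t ht) (hymono t ht htT)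
          (momentumCoeff_succ_le hβ₁.1.le ht) (momentumCoeff_le hβ₁.1.le ht) hβ₁.2
    _ ≤ D ^ 2 * (G / γ / (1 - β₁)) := by gcongr
    _ = D ^ 2 * G / (γ * (1 - β₁)) := by rw [div_div, mul_div_assoc]

lemma sqrt_le_of_isGreatest (hβ₂ : β₂ ∈ Set.Ioo 0 1) (hG : ∀ t, 1 ≤ t → t ≤ T → |g t| ≤ G)
    (hv : ∀ t, 1 ≤ t → t ≤ T → v t = (1 - β₂) * discountedSum β₂ (fun s => g s ^ 2) t)
    {t : ℕ} (htT : t ≤ T) (hvhat : IsGreatest {x | ∃ s, 1 ≤ s ∧ s ≤ t ∧ x = v s} (vhat t)) :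
    √(vhat t) ≤ G := by
  obtain ⟨s, hs, hst, heq⟩ := hvhat.1
  refine sqrt_le_iff.mpr ⟨(abs_nonneg _).trans (hG s hs (hst.trans htT)), ?_⟩
  rw [heq, hv s hs (hst.trans htT)]
  exact one_sub_mul_discountedSum_le ⟨hβ₂.1.le, hβ₂.2.le⟩ s
    (fun u hu hus => sq_le_sq.mpr ((hG u hu (by omega)).trans (le_abs_self G))) (sq_nonneg G)

lemma sum_mul_sub_le (hT : 1 ≤ T) (hβ₁ : β₁ ∈ Set.Ioo 0 1) (hβ₂ : β₂ ∈ Set.Ioo 0 1)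
    (hβ : β₁ ^ 2 < β₂) (hγ : 0 < γ) (hm0 : m 0 = 0)
    (hm : ∀ t, 1 ≤ t → t ≤ T →
      m t = momentumCoeff β₁ t * m (t - 1) + (1 - momentumCoeff β₁ t) * g t)
    (hv : ∀ t, 1 ≤ t → t ≤ T → v t = (1 - β₂) * discountedSum β₂ (fun s => g s ^ 2) t)
    (hvhat : ∀ t, 1 ≤ t → t ≤ T → IsGreatest {x | ∃ s, 1 ≤ s ∧ s ≤ t ∧ x = v s} (vhat t))
    (hupd : ∀ t, 1 ≤ t → t ≤ T → w (t + 1) = w t - stepSize β₁ γ t * m t / √(vhat t))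
    (hD : ∀ t, 1 ≤ t → t ≤ T → |w t - w₀| ≤ D) (hG : ∀ t, 1 ≤ t → t ≤ T → |g t| ≤ G)
    (hvpos : ∀ t, 1 ≤ t → t ≤ T → 0 < vhat t)
    (hvmono : ∀ t, 1 ≤ t → t + 1 ≤ T → √(vhat t) / γ ≤ √(vhat (t + 1)) / γ) :
    ∑ t ∈ Icc 1 T, g t * (w t - w₀) ≤ D ^ 2 * G / (γ * (1 - β₁)) / 2 +
      T * (γ * (β₂ / ((1 - β₂) * (β₂ - β₁ ^ 2)) / (1 - β₁)) * G / 2) +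
      β₁ * G * D / (1 - β₁) * (2 * √(T : ℝ)) := by
  set K := β₂ / ((1 - β₂) * (β₂ - β₁ ^ 2)) / (1 - β₁)
  have hK : 0 ≤ K := div_nonneg (div_nonneg hβ₂.1.le (mul_nonneg (by linarith [hβ₂.2])
    (by linarith))) (by linarith [hβ₁.2])
  have hG0 : 0 ≤ G := (abs_nonneg _).trans (hG 1 le_rfl hT)
  have hD0 : 0 ≤ D := (abs_nonneg _).trans (hD 1 le_rfl hT)
  have hmG := abs_le_of_eq_convexComb hG0 hm0
    (fun t ht _ => ⟨(momentumCoeff_pos hβ₁.1 ht).le,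
      (momentumCoeff_le hβ₁.1.le ht).trans hβ₁.2.le⟩) hm hG
  have hvG := fun t ht htT => sqrt_le_of_isGreatest hβ₂ hG hv htT (hvhat t ht htT)
  have hstep : ∀ t ∈ Icc 1 T, g t * (w t - w₀) ≤ ((w t - w₀) ^ 2 - (w (t + 1) - w₀) ^ 2) *
        (√(vhat t) / stepSize β₁ γ t / (1 - momentumCoeff β₁ t)) / 2
      + γ * K * G / 2 + β₁ * G * D / (1 - β₁) * (√(t : ℝ))⁻¹ := fun t ht => by
    obtain ⟨ht, htT⟩ := mem_Icc.mp ht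
    exact mul_sub_le_of_step hβ₁ hγ hK ht (hm t ht htT) (hupd t ht htT)
      (sq_firstMoment_le hβ₁ hβ₂ hβ hm0 hm ht htT (hv t ht htT)
        ((hvhat t ht htT).2 ⟨t, ht, le_rfl, rfl⟩))
      (hvpos t ht htT) (hvG t ht htT) (hmG (t - 1) (by omega)) (hD t ht htT)
  calc _ ≤ _ := sum_le_sum hstep
    _ = (∑ t ∈ Icc 1 T, ((w t - w₀) ^ 2 - (w (t + 1) - w₀) ^ 2) *
          (√(vhat t) / stepSize β₁ γ t / (1 - momentumCoeff β₁ t))) / 2 +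
        T * (γ * K * G / 2) + β₁ * G * D / (1 - β₁) * ∑ t ∈ Icc 1 T, (√(t : ℝ))⁻¹ := by
      rw [sum_add_distrib, sum_add_distrib, sum_div, sum_const, Nat.card_Icc, mul_sum,
        nsmul_eq_mul, Nat.add_sub_cancel]
    _ ≤ _ := by
      gcongr
      · exact sum_sq_sub_mul_le hT hβ₁ hγ hD hvmono (hvG T hT le_rfl)
      · exact div_nonneg (by have := hβ₁.1; positivity) (by linarith [hβ₁.2])
      · exact sum_inv_sqrt_le T

end Coordinate

end AMSGrad

/-- Convergence of AMSGrad with constant step size (Theorem C.4).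
The losses `ℓ t` are convex and differentiable with gradients `g t` at the
iterates `w t`; `m` is the first-moment average with parameters
`β_{1,t} = β₁/√t`, `v` the second-moment average with parameter `β₂`,
`v̂ t i = max_{1 ≤ s ≤ t} v s i`, and the iterates are updated by
`w_{t+1,i} = w_{t,i} − γ_t m_{t,i}/√(v̂_{t,i})` with
`γ_t = γ / (1 − ∏_{s=1}^t β_{1,s})`. -/
theorem stmt5 {d : ℕ} (T : ℕ) (hT : 1 ≤ T)
    (ℓ : ℕ → EuclideanSpace ℝ (Fin d) → ℝ)
    (w g m : ℕ → EuclideanSpace ℝ (Fin d))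
    (v vhat : ℕ → Fin d → ℝ)
    (wstar : EuclideanSpace ℝ (Fin d))
    (β1 β2 γ D G : ℝ)
    (hβ1 : β1 ∈ Set.Ioo (0 : ℝ) 1) (hβ2 : β2 ∈ Set.Ioo (0 : ℝ) 1)
    (hβ12 : β1 ^ 2 < β2) (hγ : 0 < γ)
    (hconv : ∀ t, 1 ≤ t → t ≤ T → ConvexOn ℝ Set.univ (ℓ t))
    (hgrad : ∀ t, 1 ≤ t → t ≤ T → HasGradientAt (ℓ t) (g t) (w t))
    (hm0 : m 0 = 0)
    (hm : ∀ t, 1 ≤ t → t ≤ T → ∀ i,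
      m t i = (β1 / Real.sqrt t) * m (t - 1) i + (1 - β1 / Real.sqrt t) * g t i)
    (hv : ∀ t, 1 ≤ t → t ≤ T → ∀ i,
      v t i = (1 - β2) * ∑ s ∈ Finset.Icc 1 t, β2 ^ (t - s) * g s i ^ 2)
    (hvhat : ∀ t, 1 ≤ t → t ≤ T → ∀ i,
      IsGreatest {x : ℝ | ∃ s, 1 ≤ s ∧ s ≤ t ∧ x = v s i} (vhat t i))
    (hupd : ∀ t, 1 ≤ t → t ≤ T → ∀ i,
      w (t + 1) i = w t i -
        (γ / (1 - ∏ s ∈ Finset.Icc 1 t, (β1 / Real.sqrt s))) * m t i /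
          Real.sqrt (vhat t i))
    (hD : ∀ t, 1 ≤ t → t ≤ T → ∀ i, |w t i - wstar i| ≤ D)
    (hG : ∀ t, 1 ≤ t → t ≤ T → ∀ i, |g t i| ≤ G)
    (hvpos : ∀ t, 1 ≤ t → t ≤ T → ∀ i, 0 < vhat t i)
    (hvmono : ∀ i, ∀ s t, 1 ≤ s → s ≤ t → t ≤ T →
      Real.sqrt (vhat s i) / γ ≤ Real.sqrt (vhat t i) / γ) :
    (1 / (T : ℝ)) * ∑ t ∈ Finset.Icc 1 T, (ℓ t (w t) - ℓ t wstar) ≤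
      d * D ^ 2 * G / (2 * T * γ * (1 - β1)) +
      2 * d * D * G * β1 / ((1 - β1) * Real.sqrt T) +
      d * G * γ * (β2 / ((1 - β2) * (β2 - β1 ^ 2))) / (2 * (1 - β1)) := by
  have hcoord (i : Fin d) := AMSGrad.sum_mul_sub_le (g := fun t => g t i) (m := fun t => m t i)
    (w := fun t => w t i) (w₀ := wstar i) hT hβ1 hβ2 hβ12 hγ (by simp [hm0])
    (fun t h1 h2 => hm t h1 h2 i) (fun t h1 h2 => hv t h1 h2 i) (fun t h1 h2 => hvhat t h1 h2 i)
    (fun t h1 h2 => hupd t h1 h2 i) (fun t h1 h2 => hD t h1 h2 i) (fun t h1 h2 => hG t h1 h2 i)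
    (fun t h1 h2 => hvpos t h1 h2 i) (fun t h1 h2 => hvmono i t (t + 1) h1 (by omega) h2)
  have hT0 : (0 : ℝ) < T := by exact_mod_cast hT
  calc (1 / (T : ℝ)) * ∑ t ∈ Icc 1 T, (ℓ t (w t) - ℓ t wstar)
      ≤ (1 / T) * ∑ i, ∑ t ∈ Icc 1 T, g t i * (w t i - wstar i) := by
        rw [sum_comm]
        gcongr with t ht
        obtain ⟨h1, h2⟩ := mem_Icc.mp ht
        exact (hconv t h1 h2).sub_le_sum_mul_of_hasGradientAt (hgrad t h1 h2) wstar
    _ ≤ (1 / T) * ∑ _i : Fin d, (D ^ 2 * G / (γ * (1 - β1)) / 2 +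
          T * (γ * (β2 / ((1 - β2) * (β2 - β1 ^ 2)) / (1 - β1)) * G / 2) +
          β1 * G * D / (1 - β1) * (2 * √(T : ℝ))) := by
        gcongr with i
        exact hcoord i
    _ = _ := by
      rw [sum_const, card_univ, Fintype.card_fin, nsmul_eq_mul]
      have hsT : √(T : ℝ) ^ 2 = T := sq_sqrt hT0.le
      set s := √(T : ℝ)
      rw [← hsT]
      have : 0 < s := sqrt_pos.mpr hT0
      have := sub_pos.mpr hβ1.2
      have := sub_pos.mpr hβ2.2
      have := sub_pos.mpr hβ12
      field_simp
      ring
end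

section
/- Let (m_t), (v_t), (v̂_t) be defined from a gradient sequence (g_s) with |g_s| ≤ G by m_t = Σ_{s=1}^t (1−β_{1,s})(∏_{r=s+1}^t β_{1,r}) g_s, v_t = (1−β_2) Σ_{s=1}^t β_2^{t−s} g_s², and v̂_t ≥ v_t > 0, where (β_{1,s}) ⊆ [0,1) is non-increasing with β_{1,s} ≤ β_1, β_2 ∈ (0,1), and β_1² < β_2. Then for every t, m_t² / √(v̂_t) ≤ C(β_1,β_2) · √(v_t) ≤ C(β_1,β_2) · G, where C(β_1,β_2) = β_2/((1−β_2)(β_2 − β_1²)). -/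
/-!
Write `m_t = ∑ c_s g_s` with momentum coefficients `0 ≤ c_s ≤ β₁^(t-s)`. Cauchy–Schwarz with the
weights `β₂^(t-s)` of `v_t` gives `m_t² ≤ (∑ c_s² / β₂^(t-s)) · ∑ β₂^(t-s) g_s²`, and the first
factor is dominated by the geometric series in `β₁²/β₂ < 1`, so `m_t² ≤ C(β₁,β₂) v_t`. Dividing
by `√v̂_t ≥ √v_t` gives the first bound; the second is `v_t ≤ G²`, again a geometric series.
-/

open Finset

lemma sum_Icc_pow_sub_le {q : ℝ} (hq0 : 0 ≤ q) (hq1 : q < 1) (t : ℕ) :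
    ∑ s ∈ Icc 1 t, q ^ (t - s) ≤ 1 / (1 - q) := by
  rw [← Ico_add_one_right_eq_Icc, sum_Ico_reflect (q ^ ·) 1 le_rfl]
  simpa using geom_sum_Ico_le_of_lt_one hq0 hq1 (m := 0) (n := t)

def momentumCoeff (b : ℕ → ℝ) (t s : ℕ) : ℝ :=
  (1 - b s) * ∏ r ∈ Icc (s + 1) t, b r

lemma momentumCoeff_nonneg {b : ℕ → ℝ} (hb0 : ∀ r, 0 ≤ b r) (hb1 : ∀ r, b r ≤ 1)
    (t s : ℕ) : 0 ≤ momentumCoeff b t s :=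
  mul_nonneg (sub_nonneg.mpr (hb1 s)) (prod_nonneg fun r _ ↦ hb0 r)

lemma momentumCoeff_le_pow {b : ℕ → ℝ} {β : ℝ} (hb0 : ∀ r, 0 ≤ b r) (hbβ : ∀ r, b r ≤ β)
    (t s : ℕ) :
    momentumCoeff b t s ≤ β ^ (t - s) :=
  calc momentumCoeff b t s ≤ ∏ r ∈ Icc (s + 1) t, b r :=
        mul_le_of_le_one_left (prod_nonneg fun r _ ↦ hb0 r) (sub_le_self _ (hb0 s))
    _ ≤ ∏ r ∈ Icc (s + 1) t, β := prod_le_prod (fun r _ ↦ hb0 r) (fun r _ ↦ hbβ r)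
    _ = β ^ (t - s) := by rw [prod_const, Nat.card_Icc, Nat.add_sub_add_right]

lemma sq_sum_momentumCoeff_mul_le {b g : ℕ → ℝ} {β1 β2 : ℝ} (hb0 : ∀ r, 0 ≤ b r)
    (hb1 : ∀ r, b r ≤ 1) (hbβ : ∀ r, b r ≤ β1) (hβ2 : 0 < β2) (hβ12 : β1 ^ 2 < β2) (t : ℕ) :
    (∑ s ∈ Icc 1 t, momentumCoeff b t s * g s) ^ 2 ≤
      β2 / (β2 - β1 ^ 2) * ∑ s ∈ Icc 1 t, β2 ^ (t - s) * g s ^ 2 := by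
  have hq1 : β1 ^ 2 / β2 < 1 := (div_lt_one hβ2).mpr hβ12
  calc (∑ s ∈ Icc 1 t, momentumCoeff b t s * g s) ^ 2
      ≤ (∑ s ∈ Icc 1 t, momentumCoeff b t s ^ 2 / β2 ^ (t - s)) *
          ∑ s ∈ Icc 1 t, β2 ^ (t - s) * g s ^ 2 := by
        refine sum_sq_le_sum_mul_sum_of_sq_le_mul _ (fun s _ ↦ by positivity)
          (fun s _ ↦ by positivity) fun s _ ↦ le_of_eq ?_
        field_simp
    _ ≤ (∑ s ∈ Icc 1 t, (β1 ^ 2 / β2) ^ (t - s)) * ∑ s ∈ Icc 1 t, β2 ^ (t - s) * g s ^ 2 := by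
        gcongr with s
        rw [div_pow, pow_right_comm]
        gcongr
        exacts [momentumCoeff_nonneg hb0 hb1 t s, momentumCoeff_le_pow hb0 hbβ t s]
    _ ≤ β2 / (β2 - β1 ^ 2) * ∑ s ∈ Icc 1 t, β2 ^ (t - s) * g s ^ 2 := by
        gcongr
        calc ∑ s ∈ Icc 1 t, (β1 ^ 2 / β2) ^ (t - s) ≤ 1 / (1 - β1 ^ 2 / β2) :=
              sum_Icc_pow_sub_le (by positivity) hq1 t
          _ = β2 / (β2 - β1 ^ 2) := by field_simp

lemma mul_sum_pow_mul_sq_le {g : ℕ → ℝ} {β G : ℝ} (hG : ∀ s, |g s| ≤ G) (hβ0 : 0 ≤ β)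
    (hβ1 : β < 1) (t : ℕ) : (1 - β) * ∑ s ∈ Icc 1 t, β ^ (t - s) * g s ^ 2 ≤ G ^ 2 := by
  have hg : ∀ s, g s ^ 2 ≤ G ^ 2 := fun s ↦ sq_abs (g s) ▸
    pow_le_pow_left₀ (abs_nonneg _) (hG s) 2
  calc (1 - β) * ∑ s ∈ Icc 1 t, β ^ (t - s) * g s ^ 2
      ≤ (1 - β) * ((∑ s ∈ Icc 1 t, β ^ (t - s)) * G ^ 2) := by
        rw [sum_mul]
        exact mul_le_mul_of_nonneg_left (sum_le_sum fun s _ ↦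
          mul_le_mul_of_nonneg_left (hg s) (by positivity)) (by linarith)
    _ ≤ (1 - β) * (1 / (1 - β) * G ^ 2) := by
        gcongr
        exact sum_Icc_pow_sub_le hβ0 hβ1 t
    _ = G ^ 2 := by field_simp [(sub_pos.mpr hβ1).ne']

lemma div_sqrt_le_mul_sqrt {a C v w : ℝ} (ha : 0 ≤ a) (hav : a ≤ C * v) (hv : 0 ≤ v)
    (hvw : v ≤ w) : a / √w ≤ C * √v := by
  rcases hv.eq_or_lt with rfl | hv
  · simp [le_antisymm (by simpa using hav) ha]
  calc a / √w ≤ a / √v := div_le_div_of_nonneg_left ha (Real.sqrt_pos.mpr hv)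
        (Real.sqrt_le_sqrt hvw)
    _ ≤ C * v / √v := by gcongr
    _ = C * √v := by rw [mul_div_assoc, Real.div_sqrt]

theorem stmt13_general (t : ℕ) (g β1s : ℕ → ℝ) (β1 β2 G mt vt vhat : ℝ)
    (hG : ∀ s, |g s| ≤ G)
    (hβ1s : ∀ s, β1s s ∈ Set.Ico (0 : ℝ) 1)
    (hle : ∀ s, β1s s ≤ β1)
    (hβ2 : β2 ∈ Set.Ioo (0 : ℝ) 1) (hβ12 : β1 ^ 2 < β2)
    (hm : mt = ∑ s ∈ Finset.Icc 1 t,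
      (1 - β1s s) * (∏ r ∈ Finset.Icc (s + 1) t, β1s r) * g s)
    (hv : vt = (1 - β2) * ∑ s ∈ Finset.Icc 1 t, β2 ^ (t - s) * g s ^ 2)
    (hvhat : vt ≤ vhat) :
    mt ^ 2 / Real.sqrt vhat ≤
        (β2 / ((1 - β2) * (β2 - β1 ^ 2))) * Real.sqrt vt ∧
      (β2 / ((1 - β2) * (β2 - β1 ^ 2))) * Real.sqrt vt ≤
        (β2 / ((1 - β2) * (β2 - β1 ^ 2))) * G := by
  obtain ⟨hβ2pos, hβ2lt⟩ := hβ2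
  have h1β2 : 0 < 1 - β2 := by linarith
  have hgap : 0 < β2 - β1 ^ 2 := by linarith
  have hC : 0 ≤ β2 / ((1 - β2) * (β2 - β1 ^ 2)) := by positivity
  have hmt : mt ^ 2 ≤ β2 / ((1 - β2) * (β2 - β1 ^ 2)) * vt := by
    have hCv : β2 / ((1 - β2) * (β2 - β1 ^ 2)) * vt =
        β2 / (β2 - β1 ^ 2) * ∑ s ∈ Icc 1 t, β2 ^ (t - s) * g s ^ 2 := by
      rw [hv]; field_simp
    rw [hm, hCv]
    exact sq_sum_momentumCoeff_mul_le (fun r ↦ (hβ1s r).1) (fun r ↦ (hβ1s r).2.le) hle hβ2pos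
      hβ12 t
  have hvG : vt ≤ G ^ 2 := hv ▸ mul_sum_pow_mul_sq_le hG hβ2pos.le hβ2lt t
  have hvt : 0 ≤ vt := hv ▸ by positivity
  refine ⟨div_sqrt_le_mul_sqrt (sq_nonneg _) hmt hvt hvhat, mul_le_mul_of_nonneg_left ?_ hC⟩
  exact Real.sqrt_le_iff.mpr ⟨(abs_nonneg _).trans (hG 0), hvG⟩

/-- Per-step bound on the third AMSGrad decomposition term:
`m_t²/√v̂_t ≤ C(β₁,β₂) √v_t ≤ C(β₁,β₂) G`, where
`C(β₁,β₂) = β₂/((1−β₂)(β₂−β₁²))`. -/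
theorem stmt13 (t : ℕ) (ht : 1 ≤ t) (g β1s : ℕ → ℝ) (β1 β2 G mt vt vhat : ℝ)
    (hG : ∀ s, |g s| ≤ G)
    (hβ1s : ∀ s, β1s s ∈ Set.Ico (0 : ℝ) 1)
    (hmono : ∀ s u, s ≤ u → β1s u ≤ β1s s)
    (hle : ∀ s, β1s s ≤ β1)
    (hβ2 : β2 ∈ Set.Ioo (0 : ℝ) 1) (hβ12 : β1 ^ 2 < β2)
    (hm : mt = ∑ s ∈ Finset.Icc 1 t,
      (1 - β1s s) * (∏ r ∈ Finset.Icc (s + 1) t, β1s r) * g s)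
    (hv : vt = (1 - β2) * ∑ s ∈ Finset.Icc 1 t, β2 ^ (t - s) * g s ^ 2)
    (hvpos : 0 < vt) (hvhat : vt ≤ vhat) :
    mt ^ 2 / Real.sqrt vhat ≤
        (β2 / ((1 - β2) * (β2 - β1 ^ 2))) * Real.sqrt vt ∧
      (β2 / ((1 - β2) * (β2 - β1 ^ 2))) * Real.sqrt vt ≤
        (β2 / ((1 - β2) * (β2 - β1 ^ 2))) * G :=
  stmt13_general t g β1s β1 β2 G mt vt vhat hG hβ1s hle hβ2 hβ12 hm hv hvhat
end
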